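/- Let G be an AH-algebra and let g,h ∈ G, with (p_{g,λ})_{λ∈ℝ} the spectral resolution of g. Then hCg if and only if hCp_{g,λ} for all λ ∈ ℝ. -/

import Mathlib

/-!
Each spectral projection `p_{g,λ} = 1 - ((g - λ)⁺)°` is obtained from `g` by taking a positive
square root, a positive part and a carrier projection, and each of these operations lands in the
bicommutant of its argument (square roots and carriers are suprema of increasing polynomial
sequences, supplied by the commutative Vigier property, and are unique). Hence `p_{g,λ}` commutes
with everything that commutes with `g`.

Conversely, the `p_{g,λ}` increase with `λ` and satisfy
`λ (p_{g,μ} - p_{g,λ}) ≤ g (p_{g,μ} - p_{g,λ}) ≤ μ (p_{g,μ} - p_{g,λ})` for `λ ≤ μ`. Summing over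
the dyadic partitions of an interval `[a, b]` containing the spectrum, the lower Riemann–Stieltjes
sums of `∫ λ dp_{g,λ}` increase and lie within `(b - a) / 2ⁿ` of `g`. Their supremum is therefore
`g`, and the Vigier property puts it in the bicommutant of the sums, so anything commuting with
all `p_{g,λ}` commutes with `g`.
-/

/-- An e-ring `(R,E)`: an associative ring `R` with unity together with a set `E ⊆ R`
of effects, satisfying the Foulis axioms.  `E⁺` is realized as the additive submonoid
closure of `E` (the set of all finite sums of effects). -/
structure ERing (R : Type*) [Ring R] where
  E : Set R
  zero_mem : (0 : R) ∈ E
  one_mem : (1 : R) ∈ E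
  compl_mem : ∀ e ∈ E, 1 - e ∈ E
  epos_i : ∀ a ∈ AddSubmonoid.closure E, -a ∈ AddSubmonoid.closure E → a = 0
  epos_ii : ∀ a ∈ AddSubmonoid.closure E, 1 - a ∈ AddSubmonoid.closure E → a ∈ E
  epos_iii : ∀ a ∈ AddSubmonoid.closure E, ∀ b ∈ AddSubmonoid.closure E,
    a * b = b * a → a * b ∈ AddSubmonoid.closure E
  epos_iv : ∀ a ∈ AddSubmonoid.closure E, ∀ b ∈ AddSubmonoid.closure E,
    a * b * a ∈ AddSubmonoid.closure E
  epos_v : ∀ a ∈ AddSubmonoid.closure E, ∀ b ∈ AddSubmonoid.closure E,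
    a * b * a = 0 → a * b = 0 ∧ b * a = 0
  epos_vi : ∀ a ∈ AddSubmonoid.closure E, ∀ b ∈ AddSubmonoid.closure E,
    (a - b) ^ 2 ∈ AddSubmonoid.closure E
  zero_ne_one : (0 : R) ≠ 1

namespace ERing

variable {R : Type*} [Ring R] (er : ERing R)

/-- `E⁺`, the set of all finite sums of effects; the positive cone of the directed group. -/
def Epos : Set R := (AddSubmonoid.closure er.E : Set R)

/-- The directed group `G = E⁺ - E⁺` of the e-ring. -/
def G : Set R := {g | ∃ a ∈ er.Epos, ∃ b ∈ er.Epos, g = a - b}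

/-- The partial order on the directed group: `g ≤ h` iff `h - g ∈ E⁺`. -/
def le (g h : R) : Prop := h - g ∈ er.Epos

/-- The set of projections `P = {p ∈ G : p = p²}`. -/
def P : Set R := {p | p ∈ er.G ∧ p = p ^ 2}

/-- The commutant in `G` of a subset `A ⊆ G`. -/
def commutant (A : Set R) : Set R := {g | g ∈ er.G ∧ ∀ a ∈ A, g * a = a * g}

/-- The bicommutant in `G` of a subset `A ⊆ G`. -/
def CC (A : Set R) : Set R := er.commutant (er.commutant A)

/-- `s` is the supremum of `A` within the subset `S` (w.r.t. the e-ring order). -/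
def IsSupIn (S A : Set R) (s : R) : Prop :=
  s ∈ S ∧ (∀ a ∈ A, er.le a s) ∧ ∀ b ∈ S, (∀ a ∈ A, er.le a b) → er.le s b

/-- `s` is the infimum of `A` within the subset `S` (w.r.t. the e-ring order). -/
def IsInfIn (S A : Set R) (s : R) : Prop :=
  s ∈ S ∧ (∀ a ∈ A, er.le s a) ∧ ∀ b ∈ S, (∀ a ∈ A, er.le b a) → er.le b s

/-- Quadratic annihilation property. -/
def HasQA : Prop := ∀ g ∈ er.G, ∀ h ∈ er.G, g * h ^ 2 * g = 0 → g * h = 0 ∧ h * g = 0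

/-- Commutative Vigier property: every ascending sequence of pairwise commuting elements
of `G` bounded above in `G` has a supremum in `G` which double commutes with the sequence. -/
def HasCV : Prop :=
  ∀ g : ℕ → R, (∀ n, g n ∈ er.G) → (∀ n, er.le (g n) (g (n + 1))) →
    (∀ m n, g m * g n = g n * g m) → (∃ b ∈ er.G, ∀ n, er.le (g n) b) →
    ∃ s, er.IsSupIn er.G (Set.range g) s ∧ s ∈ er.CC (Set.range g)

/-- `G` is an abstract Hermitian (AH) algebra: there is a semitransparent effect `½`,
`G` has quadratic annihilation, and `G` has the commutative Vigier property. -/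
def IsAH : Prop := (∃ h ∈ er.E, h + h = 1) ∧ er.HasQA ∧ er.HasCV

end ERing

namespace ERing

variable {R : Type*} [Ring R] (er : ERing R)

/-- `m` is the absolute value `|g| = (g²)^(1/2)` of `g`: `m ∈ G`, `0 ≤ m`, `m² = g²`. -/
def IsAbs (g m : R) : Prop := m ∈ er.G ∧ er.le 0 m ∧ m ^ 2 = g ^ 2

/-- `a` is the positive part `g⁺ = ½(|g| + g)` of `g`, i.e. `a ∈ G` and `a + a = |g| + g`. -/
def IsPosPart (g a : R) : Prop := a ∈ er.G ∧ ∃ m, er.IsAbs g m ∧ a + a = m + g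

/-- `b` is the negative part `g⁻ = ½(|g| − g)` of `g`, i.e. `b ∈ G` and `b + b = |g| − g`. -/
def IsNegPart (g b : R) : Prop := b ∈ er.G ∧ ∃ m, er.IsAbs g m ∧ b + b = m - g

/-- `p` is the carrier projection `g°` of `g`. -/
def IsCarrier (g p : R) : Prop := p ∈ er.P ∧ ∀ h ∈ er.G, (g * h = 0 ↔ p * h = 0)

end ERing

namespace ERing

variable {R : Type*} [Ring R] [Algebra ℝ R] (er : ERing R)

/-- The 1-norm `‖g‖ = inf {λ : 0 ≤ λ, −λ·1 ≤ g ≤ λ·1}`. -/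
noncomputable def norm1 (g : R) : ℝ :=
  sInf {l : ℝ | 0 ≤ l ∧ er.le (-(l • (1 : R))) g ∧ er.le g (l • (1 : R))}

/-- The spectral lower bound `L_g = sup {λ : λ·1 ≤ g}`. -/
noncomputable def specL (g : R) : ℝ := sSup {l : ℝ | er.le (l • (1 : R)) g}

/-- The spectral upper bound `U_g = inf {λ : g ≤ λ·1}`. -/
noncomputable def specU (g : R) : ℝ := sInf {l : ℝ | er.le g (l • (1 : R))}

/-- `p` is the spectral projection `p_{g,λ} = 1 − ((g − λ·1)⁺)°`. -/
def IsSpecProj (g : R) (l : ℝ) (p : R) : Prop :=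
  ∃ a, er.IsPosPart (g - l • (1 : R)) a ∧ ∃ q, er.IsCarrier a q ∧ p = 1 - q

/-- `d` is the λ-eigenprojection `d_{g,λ} = 1 − (g − λ·1)°`. -/
def IsEigenProj (g : R) (l : ℝ) (d : R) : Prop :=
  ∃ q, er.IsCarrier (g - l • (1 : R)) q ∧ d = 1 - q

end ERing

theorem Finset.sum_range_two_mul {M : Type*} [AddCommMonoid M] (f : ℕ → M) (n : ℕ) :
    ∑ i ∈ Finset.range (2 * n), f i = ∑ i ∈ Finset.range n, (f (2 * i) + f (2 * i + 1)) := by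
  induction n with
  | zero => simp
  | succ n ih =>
    rw [Nat.mul_succ, Finset.sum_range_succ, Finset.sum_range_succ, Finset.sum_range_succ, ih,
      add_assoc]

namespace ERing

section Cone

variable {R : Type*} [Ring R] {er : ERing R}

theorem zero_mem_Epos : (0 : R) ∈ er.Epos := (AddSubmonoid.closure er.E).zero_mem

theorem one_mem_Epos : (1 : R) ∈ er.Epos := AddSubmonoid.subset_closure er.one_mem

theorem add_mem_Epos {a b : R} (ha : a ∈ er.Epos) (hb : b ∈ er.Epos) : a + b ∈ er.Epos :=
  (AddSubmonoid.closure er.E).add_mem ha hb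

theorem sum_mem_Epos {ι : Type*} {s : Finset ι} {f : ι → R} (h : ∀ i ∈ s, f i ∈ er.Epos) :
    ∑ i ∈ s, f i ∈ er.Epos :=
  AddSubmonoid.sum_mem _ h

theorem mul_mem_Epos {a b : R} (ha : a ∈ er.Epos) (hb : b ∈ er.Epos) (hab : Commute a b) :
    a * b ∈ er.Epos :=
  er.epos_iii a ha b hb hab

theorem pow_mem_Epos {a : R} (ha : a ∈ er.Epos) (n : ℕ) : a ^ n ∈ er.Epos := by
  induction n with
  | zero => simpa using one_mem_Epos
  | succ n ih => rw [pow_succ]; exact mul_mem_Epos ih ha ((Commute.refl a).pow_left n)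

theorem conj_mem_Epos {a b : R} (ha : a ∈ er.Epos) (hb : b ∈ er.Epos) : a * b * a ∈ er.Epos :=
  er.epos_iv a ha b hb

theorem eq_zero_of_mem_Epos_of_neg_mem_Epos {a : R} (ha : a ∈ er.Epos) (hna : -a ∈ er.Epos) :
    a = 0 :=
  er.epos_i a ha hna

theorem eq_zero_of_add_eq_zero {a b : R} (ha : a ∈ er.Epos) (hb : b ∈ er.Epos) (h : a + b = 0) :
    a = 0 ∧ b = 0 := by
  have ha0 : a = 0 :=
    eq_zero_of_mem_Epos_of_neg_mem_Epos ha (by rwa [neg_eq_of_add_eq_zero_right h])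
  exact ⟨ha0, by rwa [ha0, zero_add] at h⟩

theorem le_antisymm {a b : R} (hab : er.le a b) (hba : er.le b a) : a = b := by
  have := eq_zero_of_mem_Epos_of_neg_mem_Epos hab (by rwa [neg_sub])
  exact (sub_eq_zero.mp this).symm

theorem mem_G_of_mem_Epos {a : R} (ha : a ∈ er.Epos) : a ∈ er.G :=
  ⟨a, ha, 0, zero_mem_Epos, (sub_zero a).symm⟩

theorem zero_mem_G : (0 : R) ∈ er.G := mem_G_of_mem_Epos zero_mem_Epos

theorem one_mem_G : (1 : R) ∈ er.G := mem_G_of_mem_Epos one_mem_Epos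

theorem neg_mem_G {x : R} (hx : x ∈ er.G) : -x ∈ er.G := by
  obtain ⟨a, ha, b, hb, rfl⟩ := hx
  exact ⟨b, hb, a, ha, (neg_sub a b)⟩

theorem add_mem_G {x y : R} (hx : x ∈ er.G) (hy : y ∈ er.G) : x + y ∈ er.G := by
  obtain ⟨a, ha, b, hb, rfl⟩ := hx
  obtain ⟨c, hc, d, hd, rfl⟩ := hy
  exact ⟨a + c, add_mem_Epos ha hc, b + d, add_mem_Epos hb hd, by abel⟩

theorem sub_mem_G {x y : R} (hx : x ∈ er.G) (hy : y ∈ er.G) : x - y ∈ er.G := by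
  simpa only [sub_eq_add_neg] using add_mem_G hx (neg_mem_G hy)

theorem sum_mem_G {ι : Type*} {s : Finset ι} {f : ι → R} (h : ∀ i ∈ s, f i ∈ er.G) :
    ∑ i ∈ s, f i ∈ er.G :=
  Finset.sum_induction f (· ∈ er.G) (fun _ _ => add_mem_G) zero_mem_G h

theorem mul_self_mem_Epos {x : R} (hx : x ∈ er.G) : x * x ∈ er.Epos := by
  obtain ⟨a, ha, b, hb, rfl⟩ := hx
  have h := er.epos_vi a ha b hb
  rwa [sq] at h

theorem mul_self_le_mul_self {a b : R} (ha : a ∈ er.Epos) (hab : er.le a b) (hc : Commute a b) :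
    er.le (a * a) (b * b) := by
  show b * b - a * a ∈ er.Epos
  have hb : b + a ∈ er.Epos := by
    rw [show b + a = (b - a) + (a + a) by abel]
    exact add_mem_Epos hab (add_mem_Epos ha ha)
  rw [hc.symm.mul_self_sub_mul_self_eq']
  exact mul_mem_Epos hab hb
    (((Commute.refl b).sub_left hc).add_right (hc.symm.sub_left (Commute.refl a)))

theorem IsAbs.mem_Epos {x m : R} (h : er.IsAbs x m) : m ∈ er.Epos := by
  simpa [ERing.le] using h.2.1

theorem IsAbs.mul_self_eq {x m : R} (h : er.IsAbs x m) : m * m = x * x := by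
  simpa only [sq] using h.2.2

end Cone

def SMulClosed {R : Type*} [Ring R] [Algebra ℝ R] (er : ERing R) : Prop :=
  ∀ l : ℝ, 0 ≤ l → ∀ a ∈ er.Epos, l • a ∈ er.Epos

section RealCone

variable {R : Type*} [Ring R] [Algebra ℝ R] {er : ERing R}

theorem exists_smul_one_sub_mem_Epos {a : R} (ha : a ∈ er.Epos) :
    ∃ t : ℝ, 0 ≤ t ∧ t • (1 : R) - a ∈ er.Epos := by
  induction ha using AddSubmonoid.closure_induction with
  | mem x hx =>
    exact ⟨1, zero_le_one, by rw [one_smul]; exact AddSubmonoid.subset_closure (er.compl_mem x hx)⟩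
  | zero => exact ⟨0, le_rfl, by simpa using zero_mem_Epos⟩
  | add x y _ _ hx hy =>
    obtain ⟨t, ht, htx⟩ := hx
    obtain ⟨s, hs, hsy⟩ := hy
    refine ⟨t + s, add_nonneg ht hs, ?_⟩
    rw [add_smul, add_sub_add_comm]
    exact add_mem_Epos htx hsy

theorem smul_mem_G (hscal : er.SMulClosed) (l : ℝ) {x : R} (hx : x ∈ er.G) : l • x ∈ er.G := by
  rcases le_total 0 l with hl | hl
  · obtain ⟨a, ha, b, hb, rfl⟩ := hx
    exact ⟨l • a, hscal l hl a ha, l • b, hscal l hl b hb, smul_sub l a b⟩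
  · obtain ⟨a, ha, b, hb, hab⟩ := neg_mem_G hx
    refine ⟨(-l) • a, hscal _ (neg_nonneg.mpr hl) a ha, (-l) • b,
      hscal _ (neg_nonneg.mpr hl) b hb, ?_⟩
    rw [← smul_sub, ← hab, smul_neg, neg_smul, neg_neg]

theorem smul_one_mem_Epos (hscal : er.SMulClosed) {l : ℝ} (hl : 0 ≤ l) : l • (1 : R) ∈ er.Epos :=
  hscal l hl 1 one_mem_Epos

theorem smul_one_mem_G (hscal : er.SMulClosed) (l : ℝ) : l • (1 : R) ∈ er.G :=
  smul_mem_G hscal l one_mem_G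

theorem mem_Epos_of_smul_mem_Epos (hscal : er.SMulClosed) {l : ℝ} (hl : 0 < l) {a : R}
    (ha : l • a ∈ er.Epos) : a ∈ er.Epos := by
  simpa [smul_smul, inv_mul_cancel₀ hl.ne'] using hscal l⁻¹ (inv_nonneg.mpr hl.le) _ ha

theorem mul_mem_G (hscal : er.SMulClosed) {x y : R} (hx : x ∈ er.G) (hy : y ∈ er.G)
    (hxy : Commute x y) : x * y ∈ er.G := by
  have h : x * y = (1 / 2 : ℝ) • ((x + y) * (x + y) - x * x - y * y) := by
    rw [add_mul, mul_add, mul_add, ← hxy.eq]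
    module
  rw [h]
  exact smul_mem_G hscal _ (sub_mem_G (sub_mem_G
    (mem_G_of_mem_Epos (mul_self_mem_Epos (add_mem_G hx hy)))
    (mem_G_of_mem_Epos (mul_self_mem_Epos hx))) (mem_G_of_mem_Epos (mul_self_mem_Epos hy)))

theorem exists_pos_smul_le_one (hscal : er.SMulClosed) {a : R} (ha : a ∈ er.Epos) :
    ∃ γ : ℝ, 0 < γ ∧ er.le (γ • a) 1 := by
  obtain ⟨t, ht, hta⟩ := exists_smul_one_sub_mem_Epos ha
  refine ⟨(t + 1)⁻¹, by positivity, ?_⟩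
  have h : (t + 1)⁻¹ • ((t • (1 : R) - a) + 1) =
      ((t + 1)⁻¹ * (t + 1)) • (1 : R) - (t + 1)⁻¹ • a := by
    module
  rw [inv_mul_cancel₀ (by positivity), one_smul] at h
  show _ ∈ er.Epos
  rw [← h]
  exact hscal _ (by positivity) _ (add_mem_Epos hta one_mem_Epos)

theorem exists_smul_one_bounds (hscal : er.SMulClosed) {x : R} (hx : x ∈ er.G) :
    ∃ t : ℝ, 0 ≤ t ∧ er.le ((-t) • (1 : R)) x ∧ er.le x (t • 1) := by
  obtain ⟨a, ha, b, hb, rfl⟩ := hx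
  obtain ⟨t, ht, hta⟩ := exists_smul_one_sub_mem_Epos ha
  obtain ⟨s, hs, hsb⟩ := exists_smul_one_sub_mem_Epos hb
  refine ⟨t + s, add_nonneg ht hs, ?_, ?_⟩
  · have h : a - b - (-(t + s)) • (1 : R) = (s • (1 : R) - b) + a + t • (1 : R) := by module
    show a - b - (-(t + s)) • (1 : R) ∈ er.Epos
    rw [h]
    exact add_mem_Epos (add_mem_Epos hsb ha) (smul_one_mem_Epos hscal ht)
  · have h : (t + s) • (1 : R) - (a - b) = (t • (1 : R) - a) + b + s • (1 : R) := by module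
    show (t + s) • (1 : R) - (a - b) ∈ er.Epos
    rw [h]
    exact add_mem_Epos (add_mem_Epos hta hb) (smul_one_mem_Epos hscal hs)

end RealCone

section AH

variable {R : Type*} [Ring R] {er : ERing R}

theorem mul_eq_zero_of_mul_mul_self_mul_eq_zero (hAH : er.IsAH) {x y : R} (hx : x ∈ er.G)
    (hy : y ∈ er.G) (h : x * (y * y) * x = 0) : x * y = 0 ∧ y * x = 0 :=
  hAH.2.1 x hx y hy (by rwa [sq])

theorem eq_zero_of_mul_self_eq_zero (hAH : er.IsAH) {x : R} (hx : x ∈ er.G) (h : x * x = 0) :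
    x = 0 := by
  simpa using (mul_eq_zero_of_mul_mul_self_mul_eq_zero hAH one_mem_G hx (by simpa using h)).1

theorem mul_eq_zero_comm (hAH : er.IsAH) {x y : R} (hx : x ∈ er.G) (hy : y ∈ er.G)
    (h : x * y = 0) : y * x = 0 := by
  have hyx : y * x = (x + y) * (x + y) - x * x - y * y := by
    rw [add_mul, mul_add, mul_add, h]; abel
  have hyxG : y * x ∈ er.G := by
    rw [hyx]
    exact sub_mem_G (sub_mem_G (mem_G_of_mem_Epos (mul_self_mem_Epos (add_mem_G hx hy)))
      (mem_G_of_mem_Epos (mul_self_mem_Epos hx))) (mem_G_of_mem_Epos (mul_self_mem_Epos hy))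
  refine eq_zero_of_mul_self_eq_zero hAH hyxG ?_
  calc y * x * (y * x) = y * (x * y) * x := by noncomm_ring
    _ = 0 := by rw [h, mul_zero, zero_mul]

theorem eq_of_mul_self_eq_of_commute (hAH : er.IsAH) {x y : R} (hx : x ∈ er.Epos)
    (hy : y ∈ er.Epos) (hxy : Commute x y) (h : x * x = y * y) : x = y := by
  set d := x - y
  have hdG : d ∈ er.G := sub_mem_G (mem_G_of_mem_Epos hx) (mem_G_of_mem_Epos hy)
  have hdx : Commute d x := (Commute.refl x).sub_left hxy.symm
  have hdy : Commute d y := hxy.sub_left (Commute.refl y)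
  have hsum : d * d * x + d * d * y = 0 := by
    rw [← mul_add, mul_assoc, ← hxy.mul_self_sub_mul_self_eq', h, sub_self, mul_zero]
  obtain ⟨hx0, hy0⟩ := eq_zero_of_add_eq_zero
    (mul_mem_Epos (mul_self_mem_Epos hdG) hx (hdx.mul_left hdx))
    (mul_mem_Epos (mul_self_mem_Epos hdG) hy (hdy.mul_left hdy)) hsum
  have hd3 : d * d * d = 0 := by
    calc d * d * d = d * d * x - d * d * y := by rw [← mul_sub]
      _ = 0 := by rw [hx0, hy0, sub_self]
  have hdd : d * d = 0 :=
    eq_zero_of_mul_self_eq_zero hAH (mem_G_of_mem_Epos (mul_self_mem_Epos hdG))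
      (by rw [← mul_assoc, hd3, zero_mul])
  exact sub_eq_zero.mp (eq_zero_of_mul_self_eq_zero hAH hdG hdd)

theorem exists_isSupIn (hAH : er.IsAH) {f : ℕ → R} (hfG : ∀ n, f n ∈ er.G)
    (hmono : ∀ n, er.le (f n) (f (n + 1))) (hcomm : ∀ m n, Commute (f m) (f n))
    {b : R} (hb : b ∈ er.G) (hfb : ∀ n, er.le (f n) b) :
    ∃ s, er.IsSupIn er.G (Set.range f) s ∧ ∀ h ∈ er.G, (∀ n, Commute h (f n)) → Commute h s := by
  obtain ⟨s, hsup, hCC⟩ := hAH.2.2 f hfG hmono (fun m n => hcomm m n) ⟨b, hb, hfb⟩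
  refine ⟨s, hsup, fun h hh hhf => (hCC.2 h ⟨hh, ?_⟩).symm⟩
  rintro _ ⟨n, rfl⟩
  exact hhf n

theorem IsSupIn.le {f : ℕ → R} {s : R} (hs : er.IsSupIn er.G (Set.range f) s) (n : ℕ) :
    er.le (f n) s :=
  hs.2.1 _ ⟨n, rfl⟩

theorem IsSupIn.le_of_forall_le {f : ℕ → R} {s c : R} (hs : er.IsSupIn er.G (Set.range f) s)
    (hc : c ∈ er.G) (hfc : ∀ n, er.le (f n) c) : er.le s c :=
  hs.2.2 c hc (by rintro _ ⟨n, rfl⟩; exact hfc n)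

theorem IsSupIn.mem_G {A : Set R} {s : R} (hs : er.IsSupIn er.G A s) : s ∈ er.G := hs.1

/-- The supremum of `n • d` absorbs `d`, which forces `d ≤ 0`. -/
theorem eq_zero_of_forall_le_smul_one [Algebra ℝ R] (hAH : er.IsAH) (hscal : er.SMulClosed)
    {d : R} (hd : d ∈ er.Epos) (hle : ∀ ε : ℝ, 0 < ε → er.le d (ε • 1)) : d = 0 := by
  have hbound : ∀ n : ℕ, er.le ((n : ℝ) • d) 1 := by
    intro n
    rcases Nat.eq_zero_or_pos n with rfl | hn
    · simpa [ERing.le] using (one_mem_Epos (er := er))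
    · have hn' : (0 : ℝ) < n := by exact_mod_cast hn
      have h := hscal n hn'.le _ (hle (n : ℝ)⁻¹ (inv_pos.mpr hn'))
      rwa [smul_sub, smul_smul, mul_inv_cancel₀ hn'.ne', one_smul] at h
  have hdG : d ∈ er.G := mem_G_of_mem_Epos hd
  obtain ⟨s, hs, -⟩ := exists_isSupIn hAH (f := fun n : ℕ => (n : ℝ) • d)
    (fun n => smul_mem_G hscal _ hdG)
    (fun n => by simpa [ERing.le, add_smul, add_sub_cancel_left] using hd)
    (fun m n => ((Commute.refl d).smul_left _).smul_right _) one_mem_G hbound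
  have hshift : er.le s (s - d) := by
    refine hs.le_of_forall_le (sub_mem_G hs.mem_G hdG) fun n => ?_
    have h := hs.le (n + 1)
    simp only [ERing.le, Nat.cast_succ, add_smul, one_smul] at h ⊢
    rwa [sub_sub, add_comm d]
  exact eq_zero_of_mem_Epos_of_neg_mem_Epos hd (by simpa [ERing.le] using hshift)

end AH

section Bicommutant

variable {R : Type*} [Ring R] {er : ERing R}

theorem mem_CC_singleton {g y : R} :
    y ∈ er.CC {g} ↔ y ∈ er.G ∧ ∀ h ∈ er.G, Commute h g → Commute h y := by
  simp only [CC, commutant, Set.mem_ofPred_eq, Set.mem_singleton_iff, forall_eq]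
  exact and_congr_right fun _ =>
    ⟨fun H h hh hhg => (H h ⟨hh, hhg⟩).symm, fun H h ⟨hh, hhg⟩ => (H h hh hhg).symm⟩

theorem mem_CC_self {g : R} (hg : g ∈ er.G) : g ∈ er.CC {g} :=
  mem_CC_singleton.mpr ⟨hg, fun _ _ h => h⟩

theorem one_mem_CC {g : R} : (1 : R) ∈ er.CC {g} :=
  mem_CC_singleton.mpr ⟨one_mem_G, fun h _ _ => Commute.one_right h⟩

theorem add_mem_CC {g y z : R} (hy : y ∈ er.CC {g}) (hz : z ∈ er.CC {g}) : y + z ∈ er.CC {g} := by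
  rw [mem_CC_singleton] at *
  exact ⟨add_mem_G hy.1 hz.1, fun h hh hhg => (hy.2 h hh hhg).add_right (hz.2 h hh hhg)⟩

theorem sub_mem_CC {g y z : R} (hy : y ∈ er.CC {g}) (hz : z ∈ er.CC {g}) : y - z ∈ er.CC {g} := by
  rw [mem_CC_singleton] at *
  exact ⟨sub_mem_G hy.1 hz.1, fun h hh hhg => (hy.2 h hh hhg).sub_right (hz.2 h hh hhg)⟩

theorem commute_of_mem_CC {g y z : R} (hg : g ∈ er.G) (hy : y ∈ er.CC {g}) (hz : z ∈ er.CC {g}) :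
    Commute y z := by
  rw [mem_CC_singleton] at hy hz
  exact hz.2 y hy.1 (hy.2 g hg (Commute.refl g)).symm

theorem CC_subset_of_mem {g y : R} (hy : y ∈ er.CC {g}) : er.CC {y} ⊆ er.CC {g} := by
  intro z hz
  rw [mem_CC_singleton] at *
  exact ⟨hz.1, fun h hh hhg => hz.2 h hh (hy.2 h hh hhg)⟩

variable [Algebra ℝ R]

theorem smul_mem_CC (hscal : er.SMulClosed) {g y : R} (l : ℝ) (hy : y ∈ er.CC {g}) :
    l • y ∈ er.CC {g} := by
  rw [mem_CC_singleton] at *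
  exact ⟨smul_mem_G hscal l hy.1, fun h hh hhg => (hy.2 h hh hhg).smul_right l⟩

theorem mul_mem_CC (hscal : er.SMulClosed) {g y z : R} (hg : g ∈ er.G) (hy : y ∈ er.CC {g})
    (hz : z ∈ er.CC {g}) : y * z ∈ er.CC {g} := by
  have hyz := commute_of_mem_CC hg hy hz
  rw [mem_CC_singleton] at *
  exact ⟨mul_mem_G hscal hy.1 hz.1 hyz, fun h hh hhg => (hy.2 h hh hhg).mul_right (hz.2 h hh hhg)⟩

end Bicommutant

section SquareRoot

variable {R : Type*} [Ring R] [Algebra ℝ R] {er : ERing R}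

/-- Increases to `√c` when `0 ≤ c ≤ 1`. -/
noncomputable def sqrtSeq (c : R) : ℕ → R
  | 0 => 0
  | n + 1 => sqrtSeq c n + (1 / 2 : ℝ) • (c - sqrtSeq c n * sqrtSeq c n)

theorem commute_sqrtSeq {x c : R} (hx : Commute x c) (n : ℕ) : Commute x (sqrtSeq c n) := by
  induction n with
  | zero => exact Commute.zero_right x
  | succ n ih => exact ih.add_right ((hx.sub_right (ih.mul_right ih)).smul_right _)

theorem sqrtSeq_bounds (hscal : er.SMulClosed) {c : R} (hc : c ∈ er.Epos) (hc1 : er.le c 1)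
    (n : ℕ) : sqrtSeq c n ∈ er.Epos ∧ er.le (sqrtSeq c n) 1 ∧
      er.le (sqrtSeq c n * sqrtSeq c n) c := by
  induction n with
  | zero => simpa [sqrtSeq, ERing.le] using ⟨zero_mem_Epos, one_mem_Epos, hc⟩
  | succ n ih =>
    obtain ⟨hs, hs1, hsc⟩ := ih
    set s := sqrtSeq c n
    set u := (1 / 2 : ℝ) • (c - s * s) with hu_def
    have hsucc : sqrtSeq c (n + 1) = s + u := rfl
    have hu : u ∈ er.Epos := hscal _ (by norm_num) _ hsc
    have hsu : Commute s u :=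
      (((commute_sqrtSeq (Commute.refl c) n).symm.sub_right
        ((Commute.refl s).mul_right (Commute.refl s))).smul_right _)
    have hs1G : 1 - s ∈ er.G := sub_mem_G one_mem_G (mem_G_of_mem_Epos hs)
    have hle : er.le (s + u) 1 := by
      show 1 - (s + u) ∈ er.Epos
      rw [show 1 - (s + u) = (1 / 2 : ℝ) • ((1 - s) * (1 - s) + (1 - c)) by
        rw [hu_def]; noncomm_ring; module]
      exact hscal _ (by norm_num) _ (add_mem_Epos (mul_self_mem_Epos hs1G) hc1)
    refine ⟨hsucc ▸ add_mem_Epos hs hu, hsucc ▸ hle, ?_⟩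
    show c - sqrtSeq c (n + 1) * sqrtSeq c (n + 1) ∈ er.Epos
    have htwo : u + u = c - s * s := by rw [hu_def]; module
    have key : c - (s + u) * (s + u) =
        u * (1 - s) + u * (1 - (s + u)) + ((c - s * s) - (u + u)) + (u * s - s * u) := by
      noncomm_ring
    rw [hsucc, key, htwo, sub_self, hsu.eq, sub_self, add_zero, add_zero]
    exact add_mem_Epos (mul_mem_Epos hu hs1 ((Commute.one_right u).sub_right hsu.symm))
      (mul_mem_Epos hu hle ((Commute.one_right u).sub_right (hsu.symm.add_right (Commute.refl u))))

/-- Both `s - d / 2` and `s + d / 2` bound the iteration, where `d = c - s²`; hence `d = 0`. -/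
theorem mul_self_eq_of_isSupIn_sqrtSeq (hscal : er.SMulClosed) {c s : R} (hc : c ∈ er.Epos)
    (hc1 : er.le c 1) (hs : er.IsSupIn er.G (Set.range (sqrtSeq c)) s)
    (hsf : ∀ n, Commute s (sqrtSeq c n)) : s * s = c := by
  have hbd := sqrtSeq_bounds hscal hc hc1
  set f := sqrtSeq c
  have hs1 : er.le s 1 := hs.le_of_forall_le one_mem_G fun n => (hbd n).2.1
  set d := c - s * s
  have hdG : d ∈ er.G :=
    sub_mem_G (mem_G_of_mem_Epos hc) (mem_G_of_mem_Epos (mul_self_mem_Epos hs.mem_G))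
  have hup : er.le s (s - (1 / 2 : ℝ) • d) := by
    refine hs.le_of_forall_le (sub_mem_G hs.mem_G (smul_mem_G hscal _ hdG)) fun n => ?_
    have key : s - (1 / 2 : ℝ) • d - f n =
        (1 / 2 : ℝ) • ((2 : ℝ) • (s - f (n + 1)) + (s * s - f n * f n)) := by
      rw [show f (n + 1) = f n + (1 / 2 : ℝ) • (c - f n * f n) from rfl]; module
    show _ ∈ er.Epos
    rw [key]
    exact hscal _ (by norm_num) _ (add_mem_Epos (hscal _ (by norm_num) _ (hs.le (n + 1)))
      (mul_self_le_mul_self (hbd n).1 (hs.le n) (hsf n).symm))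
  have hlow : er.le s (s + (1 / 2 : ℝ) • d) := by
    refine hs.le_of_forall_le (add_mem_G hs.mem_G (smul_mem_G hscal _ hdG)) fun n => ?_
    have key : s + (1 / 2 : ℝ) • d - f n =
        (1 / 2 : ℝ) • ((s - f n) * ((1 - s) + (1 - f n)) + (c - f n * f n)) +
          (1 / 2 : ℝ) • (s * f n - f n * s) := by
      simp only [d]; noncomm_ring; module
    show _ ∈ er.Epos
    rw [key, (hsf n).eq, sub_self, smul_zero, add_zero]
    refine hscal _ (by norm_num) _ (add_mem_Epos (mul_mem_Epos (hs.le n)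
      (add_mem_Epos hs1 (hbd n).2.1) ?_) (hbd n).2.2)
    exact ((Commute.one_right _).sub_right ((Commute.refl s).sub_left (hsf n).symm)).add_right
      ((Commute.one_right _).sub_right ((hsf n).sub_left (Commute.refl (f n))))
  have hd : d ∈ er.Epos := mem_Epos_of_smul_mem_Epos hscal (by norm_num : (0 : ℝ) < 1 / 2)
    (by simpa [ERing.le] using hlow)
  have hnd : -d ∈ er.Epos := mem_Epos_of_smul_mem_Epos hscal (by norm_num : (0 : ℝ) < 1 / 2)
    (by simpa [ERing.le] using hup)
  exact (sub_eq_zero.mp (eq_zero_of_mem_Epos_of_neg_mem_Epos hd hnd)).symm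

theorem exists_sqrt_of_le_one (hAH : er.IsAH) (hscal : er.SMulClosed) {c : R} (hc : c ∈ er.Epos)
    (hc1 : er.le c 1) : ∃ s ∈ er.Epos, s * s = c ∧ s ∈ er.CC {c} := by
  have hbd := sqrtSeq_bounds hscal hc hc1
  have hfG : ∀ n, sqrtSeq c n ∈ er.G := fun n => mem_G_of_mem_Epos (hbd n).1
  have hfcomm : ∀ m n, Commute (sqrtSeq c m) (sqrtSeq c n) :=
    fun m n => commute_sqrtSeq (commute_sqrtSeq (Commute.refl c) m).symm n
  have hstep : ∀ n, er.le (sqrtSeq c n) (sqrtSeq c (n + 1)) := fun n => by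
    show _ ∈ er.Epos
    rw [sqrtSeq, add_sub_cancel_left]
    exact hscal _ (by norm_num) _ (hbd n).2.2
  obtain ⟨s, hs, hsCC⟩ := exists_isSupIn hAH hfG hstep hfcomm one_mem_G fun n => (hbd n).2.1
  refine ⟨s, by simpa [ERing.le, sqrtSeq] using hs.le 0, mul_self_eq_of_isSupIn_sqrtSeq hscal hc
    hc1 hs fun n => (hsCC _ (hfG n) fun m => hfcomm n m).symm, ?_⟩
  exact mem_CC_singleton.mpr ⟨hs.mem_G, fun h hh hhc => hsCC h hh (commute_sqrtSeq hhc)⟩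

theorem exists_sqrt (hAH : er.IsAH) (hscal : er.SMulClosed) {c : R} (hc : c ∈ er.Epos) :
    ∃ s ∈ er.Epos, s * s = c ∧ s ∈ er.CC {c} := by
  obtain ⟨γ, hγ, hγc⟩ := exists_pos_smul_le_one hscal hc
  obtain ⟨σ, hσ, hσσ, hσCC⟩ := exists_sqrt_of_le_one hAH hscal (hscal γ hγ.le c hc) hγc
  refine ⟨(√γ)⁻¹ • σ, hscal _ (by positivity) _ hσ, ?_,
    smul_mem_CC hscal _ (CC_subset_of_mem
      (smul_mem_CC hscal γ (mem_CC_self (mem_G_of_mem_Epos hc))) hσCC)⟩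
  rw [smul_mul_smul_comm, hσσ, smul_smul, ← mul_inv, Real.mul_self_sqrt hγ.le,
    inv_mul_cancel₀ hγ.ne', one_smul]

theorem mem_CC_mul_self (hAH : er.IsAH) (hscal : er.SMulClosed) {m : R} (hm : m ∈ er.Epos) :
    m ∈ er.CC {m * m} := by
  obtain ⟨σ, hσ, hσσ, hσCC⟩ := exists_sqrt hAH hscal (mul_self_mem_Epos (mem_G_of_mem_Epos hm))
  have hmσ : Commute m σ := (mem_CC_singleton.mp hσCC).2 m (mem_G_of_mem_Epos hm)
    ((Commute.refl m).mul_right (Commute.refl m))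
  obtain rfl := eq_of_mul_self_eq_of_commute hAH hm hσ hmσ hσσ.symm
  exact hσCC

theorem IsAbs.mem_CC (hAH : er.IsAH) (hscal : er.SMulClosed) {x m : R} (hx : x ∈ er.G)
    (h : er.IsAbs x m) : m ∈ er.CC {x} := by
  have := mem_CC_mul_self hAH hscal h.mem_Epos
  rw [h.mul_self_eq] at this
  exact CC_subset_of_mem (mul_mem_CC hscal hx (mem_CC_self hx) (mem_CC_self hx)) this

end SquareRoot

section Carrier

variable {R : Type*} [Ring R] {er : ERing R}

theorem mem_Epos_of_mul_self_eq {q : R} (hq : q ∈ er.G) (hqq : q * q = q) : q ∈ er.Epos :=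
  hqq ▸ mul_self_mem_Epos hq

theorem IsCarrier.mem_G {a q : R} (h : er.IsCarrier a q) : q ∈ er.G := h.1.1

theorem IsCarrier.mul_self {a q : R} (h : er.IsCarrier a q) : q * q = q := by
  rw [← sq, ← h.1.2]

theorem IsCarrier.mul_eq_zero_iff {a q y : R} (h : er.IsCarrier a q) (hy : y ∈ er.G) :
    a * y = 0 ↔ q * y = 0 :=
  h.2 y hy

theorem IsCarrier.mul_eq_self {a q : R} (h : er.IsCarrier a q) : a * q = a := by
  have h1 : a * (1 - q) = 0 := (h.mul_eq_zero_iff (sub_mem_G one_mem_G h.mem_G)).mpr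
    (by rw [mul_sub, mul_one, h.mul_self, sub_self])
  rwa [mul_sub, mul_one, sub_eq_zero, eq_comm] at h1

theorem IsCarrier.unique (hAH : er.IsAH) {a q q' : R} (h : er.IsCarrier a q)
    (h' : er.IsCarrier a q') : q = q' := by
  have hqq' : q * q' = q := by
    have := (h.mul_eq_zero_iff (sub_mem_G one_mem_G h'.mem_G)).mp
      ((h'.mul_eq_zero_iff (sub_mem_G one_mem_G h'.mem_G)).mpr
        (by rw [mul_sub, mul_one, h'.mul_self, sub_self]))
    rwa [mul_sub, mul_one, sub_eq_zero, eq_comm] at this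
  have hq'q : q' * q = q' := by
    have := (h'.mul_eq_zero_iff (sub_mem_G one_mem_G h.mem_G)).mp
      ((h.mul_eq_zero_iff (sub_mem_G one_mem_G h.mem_G)).mpr
        (by rw [mul_sub, mul_one, h.mul_self, sub_self]))
    rwa [mul_sub, mul_one, sub_eq_zero, eq_comm] at this
  refine sub_eq_zero.mp (eq_zero_of_mul_self_eq_zero hAH (sub_mem_G h.mem_G h'.mem_G) ?_)
  rw [sub_mul, mul_sub, mul_sub, h.mul_self, h'.mul_self, hqq', hq'q]
  abel

/-- Increases to the carrier of `c` when `0 ≤ c ≤ 1`. -/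
def carrierSeq (c : R) (n : ℕ) : R := 1 - (1 - c) ^ n

theorem carrierSeq_succ (c : R) (n : ℕ) :
    carrierSeq c (n + 1) = carrierSeq c n + (1 - c) ^ n * c := by
  simp only [carrierSeq, pow_succ]
  noncomm_ring

theorem carrierSeq_two_mul (c : R) (n : ℕ) :
    carrierSeq c (2 * n) = carrierSeq c n + carrierSeq c n - carrierSeq c n * carrierSeq c n := by
  simp only [carrierSeq, two_mul, pow_add]
  noncomm_ring

theorem commute_carrierSeq {x c : R} (hx : Commute x c) (n : ℕ) :
    Commute x (carrierSeq c n) :=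
  (Commute.one_right x).sub_right (((Commute.one_right x).sub_right hx).pow_right n)

theorem carrierSeq_le_succ {c : R} (hc : c ∈ er.Epos) (hc1 : er.le c 1) (n : ℕ) :
    er.le (carrierSeq c n) (carrierSeq c (n + 1)) := by
  show _ ∈ er.Epos
  rw [carrierSeq_succ, add_sub_cancel_left]
  exact mul_mem_Epos (pow_mem_Epos hc1 n) hc
    (((Commute.one_left c).sub_left (Commute.refl c)).pow_left n)

theorem carrierSeq_mem_Epos {c : R} (hc : c ∈ er.Epos) (hc1 : er.le c 1) (n : ℕ) :
    carrierSeq c n ∈ er.Epos := by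
  induction n with
  | zero => simpa [carrierSeq] using zero_mem_Epos
  | succ n ih => simpa using add_mem_Epos ih (carrierSeq_le_succ hc hc1 n)

theorem carrierSeq_le_one {c : R} (hc1 : er.le c 1) (n : ℕ) : er.le (carrierSeq c n) 1 := by
  simpa [ERing.le, carrierSeq] using pow_mem_Epos hc1 n

variable [Algebra ℝ R]

/-- Since `f (2n) = 2 f n - (f n)²`, the element `(e + e²) / 2` bounds the sequence `f`. -/
theorem mul_self_eq_of_isSupIn_carrierSeq (hscal : er.SMulClosed) {c e : R} (hc : c ∈ er.Epos)
    (hc1 : er.le c 1) (he : er.IsSupIn er.G (Set.range (carrierSeq c)) e)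
    (hcomm : ∀ n, Commute e (carrierSeq c n)) : e * e = e := by
  have he0 : e ∈ er.Epos := by simpa [ERing.le, carrierSeq] using he.le 0
  have he1 : er.le e 1 := he.le_of_forall_le one_mem_G (carrierSeq_le_one hc1)
  have heeG : e * e ∈ er.G := mem_G_of_mem_Epos (mul_self_mem_Epos he.mem_G)
  have hmid : er.le e ((1 / 2 : ℝ) • (e + e * e)) := by
    refine he.le_of_forall_le (smul_mem_G hscal _ (add_mem_G he.mem_G heeG)) fun n => ?_
    have key : (1 / 2 : ℝ) • (e + e * e) - carrierSeq c n = (1 / 2 : ℝ) •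
        ((e - carrierSeq c (2 * n)) + (e * e - carrierSeq c n * carrierSeq c n)) := by
      rw [carrierSeq_two_mul]; module
    show _ ∈ er.Epos
    rw [key]
    exact hscal _ (by norm_num) _ (add_mem_Epos (he.le (2 * n))
      (mul_self_le_mul_self (carrierSeq_mem_Epos hc hc1 n) (he.le n) (hcomm n).symm))
  refine le_antisymm (er := er) ?_ ?_
  · show e - e * e ∈ er.Epos
    have h := mul_mem_Epos he0 he1 ((Commute.one_right e).sub_right (Commute.refl e))
    rwa [mul_sub, mul_one] at h
  · have h := hscal 2 (by norm_num) _ hmid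
    show e * e - e ∈ er.Epos
    convert h using 1
    module

/-- For `w = γ h² ≤ 1` with `c h = 0`: `(1 - w) - f n = (1 - c)ⁿ (1 - w) ≥ 0`, so `e ≤ 1 - w`,
and compressing by the projection `e` gives `e w e ≤ 0`. -/
theorem mul_eq_zero_of_isSupIn_carrierSeq (hAH : er.IsAH) (hscal : er.SMulClosed) {c e h : R}
    (hc : c ∈ er.Epos) (hc1 : er.le c 1) (he : er.IsSupIn er.G (Set.range (carrierSeq c)) e)
    (hee : e * e = e) (hh : h ∈ er.G) (hch : c * h = 0) : e * h = 0 := by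
  have hhc : h * c = 0 := mul_eq_zero_comm hAH (mem_G_of_mem_Epos hc) hh hch
  obtain ⟨γ, hγ, hw1⟩ := exists_pos_smul_le_one hscal (mul_self_mem_Epos hh)
  set w := γ • (h * h)
  have hw : w ∈ er.Epos := hscal γ hγ.le _ (mul_self_mem_Epos hh)
  have htw : (1 - c) * w = w := by
    rw [sub_mul, one_mul, mul_smul_comm, ← mul_assoc, hch, zero_mul, smul_zero, sub_zero]
  have hwt : w * (1 - c) = w := by
    rw [mul_sub, mul_one, smul_mul_assoc, mul_assoc, hhc, mul_zero, smul_zero, sub_zero]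
  have hcw : Commute (1 - c) w := htw.trans hwt.symm
  have hpw : ∀ n, (1 - c) ^ n * w = w := by
    intro n
    induction n with
    | zero => rw [pow_zero, one_mul]
    | succ n ih => rw [pow_succ', mul_assoc, ih, htw]
  have hew : er.le e (1 - w) := by
    refine he.le_of_forall_le (sub_mem_G one_mem_G (mem_G_of_mem_Epos hw)) fun n => ?_
    have key : 1 - w - carrierSeq c n = (1 - c) ^ n * (1 - w) := by
      rw [carrierSeq, mul_sub, mul_one, hpw]; abel
    show _ ∈ er.Epos
    rw [key]
    exact mul_mem_Epos (pow_mem_Epos hc1 n) hw1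
      ((Commute.one_right _).sub_right (hcw.pow_left n))
  have he0 : e ∈ er.Epos := by simpa [ERing.le, carrierSeq] using he.le 0
  have hewe : e * w * e = 0 := by
    refine eq_zero_of_mem_Epos_of_neg_mem_Epos (conj_mem_Epos he0 hw) ?_
    convert conj_mem_Epos he0 hew using 1
    rw [mul_sub, mul_sub, sub_mul, sub_mul, mul_one, hee, hee]
    abel
  have hehhe : e * (h * h) * e = 0 := by
    rw [mul_smul_comm, smul_mul_assoc] at hewe
    exact (smul_eq_zero.mp hewe).resolve_left hγ.ne'
  exact (mul_eq_zero_of_mul_mul_self_mul_eq_zero hAH he.mem_G hh hehhe).1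

theorem exists_isCarrier_of_le_one (hAH : er.IsAH) (hscal : er.SMulClosed) {c : R}
    (hc : c ∈ er.Epos) (hc1 : er.le c 1) : ∃ e, er.IsCarrier c e ∧ e ∈ er.CC {c} := by
  have hfG : ∀ n, carrierSeq c n ∈ er.G :=
    fun n => mem_G_of_mem_Epos (carrierSeq_mem_Epos hc hc1 n)
  obtain ⟨e, he, heCC⟩ := exists_isSupIn hAH hfG (carrierSeq_le_succ hc hc1)
    (fun m n => commute_carrierSeq (commute_carrierSeq (Commute.refl c) m).symm n)
    one_mem_G (carrierSeq_le_one hc1)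
  have hcommCC : ∀ x ∈ er.G, Commute x c → Commute x e :=
    fun x hx hxc => heCC x hx (commute_carrierSeq hxc)
  have hee : e * e = e := mul_self_eq_of_isSupIn_carrierSeq hscal hc hc1 he
    fun n => (hcommCC _ (hfG n) (commute_carrierSeq (Commute.refl c) n).symm).symm
  have hce : c * e = c := by
    have hec : Commute c e := hcommCC c (mem_G_of_mem_Epos hc) (Commute.refl c)
    have he1 : er.le e 1 := he.le_of_forall_le one_mem_G (carrierSeq_le_one hc1)
    have hcle : er.le c e := by simpa [carrierSeq] using he.le 1
    have hsum : c * (1 - e) + (e - c) * (1 - e) = 0 := by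
      rw [← add_mul, add_sub_cancel, mul_sub, mul_one, hee, sub_self]
    have h0 := (eq_zero_of_add_eq_zero
      (mul_mem_Epos hc he1 ((Commute.one_right c).sub_right hec))
      (mul_mem_Epos hcle he1 (((Commute.one_right e).sub_right (Commute.refl e)).sub_left
        ((Commute.one_right c).sub_right hec))) hsum).1
    rwa [mul_sub, mul_one, sub_eq_zero, eq_comm] at h0
  refine ⟨e, ⟨⟨he.mem_G, by rw [sq, hee]⟩, fun h hh => ⟨fun hch => ?_, fun heh => ?_⟩⟩,
    mem_CC_singleton.mpr ⟨he.mem_G, hcommCC⟩⟩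
  · exact mul_eq_zero_of_isSupIn_carrierSeq hAH hscal hc hc1 he hee hh hch
  · rw [← hce, mul_assoc, heh, mul_zero]

/-- The carrier of `y` is that of the effect `γ y²` for small `γ > 0`. -/
theorem exists_isCarrier (hAH : er.IsAH) (hscal : er.SMulClosed) {y : R} (hy : y ∈ er.G) :
    ∃ e, er.IsCarrier y e ∧ e ∈ er.CC {y} := by
  obtain ⟨γ, hγ, hc1⟩ := exists_pos_smul_le_one hscal (mul_self_mem_Epos hy)
  obtain ⟨e, he, heCC⟩ :=
    exists_isCarrier_of_le_one hAH hscal (hscal γ hγ.le _ (mul_self_mem_Epos hy)) hc1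
  refine ⟨e, ⟨he.1, fun h hh => ?_⟩, CC_subset_of_mem
    (smul_mem_CC hscal γ (mul_mem_CC hscal hy (mem_CC_self hy) (mem_CC_self hy))) heCC⟩
  rw [← he.mul_eq_zero_iff hh, smul_mul_assoc, smul_eq_zero, or_iff_right hγ.ne', mul_assoc]
  refine ⟨fun hyh => by rw [hyh, mul_zero], fun hyyh => ?_⟩
  exact (mul_eq_zero_of_mul_mul_self_mul_eq_zero hAH hh hy
    (by rw [mul_assoc, mul_assoc y, hyyh, mul_zero])).2

theorem IsCarrier.mem_CC (hAH : er.IsAH) (hscal : er.SMulClosed) {a q : R} (ha : a ∈ er.G)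
    (h : er.IsCarrier a q) : q ∈ er.CC {a} := by
  obtain ⟨e, he, heCC⟩ := exists_isCarrier hAH hscal ha
  rwa [h.unique hAH he]

end Carrier

section PositivePart

variable {R : Type*} [Ring R] [Algebra ℝ R] {er : ERing R}

/-- With `u = m - x`, `v = m + x` we have `uv = 0`; compressing `u + v = 2m` by the carrier
`e` of `u` kills `v` and leaves `u = e (2m) e ≥ 0`. -/
theorem sub_mem_Epos_of_mul_self_eq (hAH : er.IsAH) (hscal : er.SMulClosed) {x m : R}
    (hx : x ∈ er.G) (hm : m ∈ er.Epos) (hmm : m * m = x * x) (hmx : Commute m x) :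
    m - x ∈ er.Epos := by
  have huG : m - x ∈ er.G := sub_mem_G (mem_G_of_mem_Epos hm) hx
  have huv : (m - x) * (m + x) = 0 := by
    rw [← hmx.mul_self_sub_mul_self_eq', hmm, sub_self]
  obtain ⟨e, he, heCC⟩ := exists_isCarrier hAH hscal huG
  have hev : e * (m + x) = 0 :=
    (he.mul_eq_zero_iff (add_mem_G (mem_G_of_mem_Epos hm) hx)).mp huv
  have heu : e * (m - x) = m - x := by
    rw [(commute_of_mem_CC huG heCC (mem_CC_self huG)).eq, he.mul_eq_self]
  have key : e * ((2 : ℝ) • m) * e = m - x := by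
    rw [show (2 : ℝ) • m = (m - x) + (m + x) by module, mul_add, add_mul, heu, hev, zero_mul,
      add_zero, he.mul_eq_self]
  rw [← key]
  exact conj_mem_Epos (mem_Epos_of_mul_self_eq he.mem_G he.mul_self) (hscal 2 (by norm_num) m hm)

theorem IsAbs.commute (hAH : er.IsAH) (hscal : er.SMulClosed) {x m : R} (hx : x ∈ er.G)
    (h : er.IsAbs x m) : Commute m x :=
  commute_of_mem_CC hx (h.mem_CC hAH hscal hx) (mem_CC_self hx)

theorem IsAbs.sub_mem_Epos (hAH : er.IsAH) (hscal : er.SMulClosed) {x m : R} (hx : x ∈ er.G)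
    (h : er.IsAbs x m) : m - x ∈ er.Epos :=
  sub_mem_Epos_of_mul_self_eq hAH hscal hx h.mem_Epos h.mul_self_eq (h.commute hAH hscal hx)

theorem IsAbs.add_mem_Epos (hAH : er.IsAH) (hscal : er.SMulClosed) {x m : R} (hx : x ∈ er.G)
    (h : er.IsAbs x m) : m + x ∈ er.Epos := by
  simpa using sub_mem_Epos_of_mul_self_eq hAH hscal (neg_mem_G hx) h.mem_Epos
    (by rw [neg_mul_neg, h.mul_self_eq]) (h.commute hAH hscal hx).neg_right

theorem IsPosPart.exists_eq {x a : R} (h : er.IsPosPart x a) :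
    ∃ m, er.IsAbs x m ∧ a = (1 / 2 : ℝ) • (m + x) := by
  obtain ⟨-, m, hm, hsum⟩ := h
  exact ⟨m, hm, by rw [← hsum]; module⟩

theorem IsPosPart.mem_CC (hAH : er.IsAH) (hscal : er.SMulClosed) {x a : R} (hx : x ∈ er.G)
    (h : er.IsPosPart x a) : a ∈ er.CC {x} := by
  obtain ⟨m, hm, rfl⟩ := h.exists_eq
  exact smul_mem_CC hscal _ (add_mem_CC (hm.mem_CC hAH hscal hx) (mem_CC_self hx))

theorem IsPosPart.mem_Epos (hAH : er.IsAH) (hscal : er.SMulClosed) {x a : R} (hx : x ∈ er.G)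
    (h : er.IsPosPart x a) : a ∈ er.Epos := by
  obtain ⟨m, hm, rfl⟩ := h.exists_eq
  exact hscal _ (by norm_num) _ (hm.add_mem_Epos hAH hscal hx)

theorem IsPosPart.sub_mem_Epos (hAH : er.IsAH) (hscal : er.SMulClosed) {x a : R} (hx : x ∈ er.G)
    (h : er.IsPosPart x a) : a - x ∈ er.Epos := by
  obtain ⟨m, hm, rfl⟩ := h.exists_eq
  convert hscal (1 / 2) (by norm_num) _ (hm.sub_mem_Epos hAH hscal hx) using 1
  module

theorem IsPosPart.mul_sub_eq_zero (hAH : er.IsAH) (hscal : er.SMulClosed) {x a : R}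
    (hx : x ∈ er.G) (h : er.IsPosPart x a) : a * (a - x) = 0 := by
  obtain ⟨m, hm, rfl⟩ := h.exists_eq
  rw [show (1 / 2 : ℝ) • (m + x) - x = (1 / 2 : ℝ) • (m - x) by module, smul_mul_smul_comm,
    ← (hm.commute hAH hscal hx).mul_self_sub_mul_self_eq, hm.mul_self_eq, sub_self, smul_zero]

/-- `x q = x⁺` for the carrier `q` of `x⁺`, since `q` annihilates `x⁻ = x⁺ - x`. -/
theorem IsCarrier.mul_eq_posPart (hAH : er.IsAH) (hscal : er.SMulClosed) {x a q : R}
    (hx : x ∈ er.G) (ha : er.IsPosPart x a) (hq : er.IsCarrier a q) : x * q = a := by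
  have haCC := ha.mem_CC hAH hscal hx
  have hbCC : a - x ∈ er.CC {x} := sub_mem_CC haCC (mem_CC_self hx)
  have hqCC : q ∈ er.CC {x} := CC_subset_of_mem haCC (hq.mem_CC hAH hscal ha.1)
  have hqb : q * (a - x) = 0 := (hq.mul_eq_zero_iff (sub_mem_G ha.1 hx)).mp
    (ha.mul_sub_eq_zero hAH hscal hx)
  have hbq : (a - x) * q = 0 := by rw [← (commute_of_mem_CC hx hqCC hbCC).eq, hqb]
  rw [sub_mul, hq.mul_eq_self, sub_eq_zero] at hbq
  exact hbq.symm

end PositivePart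

section SpectralProjection

variable {R : Type*} [Ring R] [Algebra ℝ R] {er : ERing R}

theorem sub_smul_one_mem_CC (hscal : er.SMulClosed) {g : R} (hg : g ∈ er.G) (l : ℝ) :
    g - l • (1 : R) ∈ er.CC {g} :=
  sub_mem_CC (mem_CC_self hg) (smul_mem_CC hscal l one_mem_CC)

theorem IsSpecProj.mul_self {g p : R} {l : ℝ} (h : er.IsSpecProj g l p) : p * p = p := by
  obtain ⟨a, -, q, hq, rfl⟩ := h
  noncomm_ring
  rw [hq.mul_self]
  abel

theorem IsSpecProj.mem_CC (hAH : er.IsAH) (hscal : er.SMulClosed) {g p : R} {l : ℝ}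
    (hg : g ∈ er.G) (h : er.IsSpecProj g l p) : p ∈ er.CC {g} := by
  obtain ⟨a, ha, q, hq, rfl⟩ := h
  have hx := sub_smul_one_mem_CC hscal hg l
  have hxG : g - l • (1 : R) ∈ er.G := (mem_CC_singleton.mp hx).1
  exact sub_mem_CC one_mem_CC (CC_subset_of_mem hx
    (CC_subset_of_mem (ha.mem_CC hAH hscal hxG) (hq.mem_CC hAH hscal ha.1)))

theorem IsSpecProj.mem_Epos (hAH : er.IsAH) (hscal : er.SMulClosed) {g p : R} {l : ℝ}
    (hg : g ∈ er.G) (h : er.IsSpecProj g l p) : p ∈ er.Epos :=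
  mem_Epos_of_mul_self_eq (mem_CC_singleton.mp (h.mem_CC hAH hscal hg)).1 h.mul_self

theorem IsSpecProj.one_sub_mul_self {g p : R} {l : ℝ} (h : er.IsSpecProj g l p) :
    (1 - p) * (1 - p) = 1 - p := by
  noncomm_ring
  rw [h.mul_self]
  abel

theorem IsSpecProj.one_sub_mem_Epos (hAH : er.IsAH) (hscal : er.SMulClosed) {g p : R} {l : ℝ}
    (hg : g ∈ er.G) (h : er.IsSpecProj g l p) : 1 - p ∈ er.Epos :=
  mem_Epos_of_mul_self_eq (sub_mem_G one_mem_G (mem_CC_singleton.mp (h.mem_CC hAH hscal hg)).1)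
    h.one_sub_mul_self

theorem IsSpecProj.mul_one_sub_mem_Epos (hAH : er.IsAH) (hscal : er.SMulClosed) {g p : R}
    {l : ℝ} (hg : g ∈ er.G) (h : er.IsSpecProj g l p) : (g - l • 1) * (1 - p) ∈ er.Epos := by
  obtain ⟨a, ha, q, hq, rfl⟩ := h
  have hxG := sub_mem_G hg (smul_one_mem_G hscal l)
  rw [sub_sub_cancel, hq.mul_eq_posPart hAH hscal hxG ha]
  exact ha.mem_Epos hAH hscal hxG

theorem IsSpecProj.smul_one_sub_mul_mem_Epos (hAH : er.IsAH) (hscal : er.SMulClosed) {g p : R}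
    {l : ℝ} (hg : g ∈ er.G) (h : er.IsSpecProj g l p) : (l • 1 - g) * p ∈ er.Epos := by
  obtain ⟨a, ha, q, hq, rfl⟩ := h
  have hxG := sub_mem_G hg (smul_one_mem_G hscal l)
  have hxq := hq.mul_eq_posPart hAH hscal hxG ha
  rw [show (l • 1 - g) * (1 - q) = (g - l • 1) * q - (g - l • 1) by noncomm_ring, hxq]
  exact ha.sub_mem_Epos hAH hscal hxG

theorem IsSpecProj.one_sub_mul_eq_zero (hAH : er.IsAH) (hscal : er.SMulClosed) {g p y : R}
    {l : ℝ} (hg : g ∈ er.G) (h : er.IsSpecProj g l p) (hy : y ∈ er.G)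
    (hxy : (g - l • 1) * (1 - p) * y = 0) : (1 - p) * y = 0 := by
  obtain ⟨a, ha, q, hq, rfl⟩ := h
  rw [sub_sub_cancel, hq.mul_eq_posPart hAH hscal (sub_mem_G hg (smul_one_mem_G hscal l)) ha]
    at hxy
  rw [sub_sub_cancel]
  exact (hq.mul_eq_zero_iff hy).mp hxy

/-- The three positive terms `(g - l')(1 - p') p`, `(1 - p')(l - g) p` and `(l' - l)(1 - p') p`
add up to `0`, and the first one vanishing means `(1 - p') p = 0`. -/
theorem IsSpecProj.mul_eq_of_le (hAH : er.IsAH) (hscal : er.SMulClosed) {g p p' : R}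
    {l l' : ℝ} (hg : g ∈ er.G) (h : er.IsSpecProj g l p) (h' : er.IsSpecProj g l' p')
    (hll : l ≤ l') : p' * p = p := by
  have hpCC := h.mem_CC hAH hscal hg
  have hqCC : 1 - p' ∈ er.CC {g} := sub_mem_CC one_mem_CC (h'.mem_CC hAH hscal hg)
  have hACC : (g - l' • 1) * (1 - p') ∈ er.CC {g} :=
    mul_mem_CC hscal hg (sub_smul_one_mem_CC hscal hg l') hqCC
  have hBCC : (l • 1 - g) * p ∈ er.CC {g} := mul_mem_CC hscal hg
    (sub_mem_CC (smul_mem_CC hscal l one_mem_CC) (mem_CC_self hg)) hpCC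
  have hp := h.mem_Epos hAH hscal hg
  have hq := h'.one_sub_mem_Epos hAH hscal hg
  have key : (g - l' • 1) * (1 - p') * p + (1 - p') * ((l • 1 - g) * p) +
      (l' - l) • ((1 - p') * p) = 0 := by
    calc _ = (g * (1 - p') - (1 - p') * g) * p := by noncomm_ring; module
      _ = 0 := by rw [(commute_of_mem_CC hg (mem_CC_self hg) hqCC).eq, sub_self, zero_mul]
  have hApos := mul_mem_Epos (h'.mul_one_sub_mem_Epos hAH hscal hg) hp
    (commute_of_mem_CC hg hACC hpCC)
  have hBpos := mul_mem_Epos hq (h.smul_one_sub_mul_mem_Epos hAH hscal hg)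
    (commute_of_mem_CC hg hqCC hBCC)
  have hCpos := hscal _ (sub_nonneg.mpr hll) _ (mul_mem_Epos hq hp (commute_of_mem_CC hg hqCC hpCC))
  obtain ⟨hAB, -⟩ := eq_zero_of_add_eq_zero (add_mem_Epos hApos hBpos) hCpos key
  obtain ⟨hA, -⟩ := eq_zero_of_add_eq_zero hApos hBpos hAB
  have := h'.one_sub_mul_eq_zero hAH hscal hg (mem_G_of_mem_Epos hp) hA
  rwa [sub_mul, one_mul, sub_eq_zero, eq_comm] at this

theorem IsSpecProj.sub_mem_Epos (hAH : er.IsAH) (hscal : er.SMulClosed) {g p p' : R}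
    {l l' : ℝ} (hg : g ∈ er.G) (h : er.IsSpecProj g l p) (h' : er.IsSpecProj g l' p')
    (hll : l ≤ l') : p' - p ∈ er.Epos := by
  have hp'p := h.mul_eq_of_le hAH hscal hg h' hll
  have hpp' : p * p' = p := by
    rw [(commute_of_mem_CC hg (h.mem_CC hAH hscal hg) (h'.mem_CC hAH hscal hg)).eq, hp'p]
  refine mem_Epos_of_mul_self_eq (sub_mem_G (mem_CC_singleton.mp (h'.mem_CC hAH hscal hg)).1
    (mem_CC_singleton.mp (h.mem_CC hAH hscal hg)).1) ?_
  rw [sub_mul, mul_sub, mul_sub, h.mul_self, h'.mul_self, hp'p, hpp']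
  abel

theorem IsSpecProj.le_mul_sub (hAH : er.IsAH) (hscal : er.SMulClosed) {g p p' : R}
    {l l' : ℝ} (hg : g ∈ er.G) (h : er.IsSpecProj g l p) (h' : er.IsSpecProj g l' p')
    (hll : l ≤ l') :
    er.le (l • (p' - p)) (g * (p' - p)) ∧ er.le (g * (p' - p)) (l' • (p' - p)) := by
  have hpCC := h.mem_CC hAH hscal hg
  have hp'CC := h'.mem_CC hAH hscal hg
  have hp'p := h.mul_eq_of_le hAH hscal hg h' hll
  have hpp' : p * p' = p := by rw [(commute_of_mem_CC hg hpCC hp'CC).eq, hp'p]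
  have hp' := h'.mem_Epos hAH hscal hg
  constructor
  · have hA := mul_mem_Epos (h.mul_one_sub_mem_Epos hAH hscal hg) hp' (commute_of_mem_CC hg
      (mul_mem_CC hscal hg (sub_smul_one_mem_CC hscal hg l) (sub_mem_CC one_mem_CC hpCC)) hp'CC)
    show _ ∈ er.Epos
    have hΔ : (1 - p) * p' = p' - p := by rw [sub_mul, one_mul, hpp']
    convert hA using 1
    rw [mul_assoc, hΔ, sub_mul, smul_one_mul]
  · have hB := mul_mem_Epos (h'.smul_one_sub_mul_mem_Epos hAH hscal hg)
      (h.one_sub_mem_Epos hAH hscal hg)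
      (commute_of_mem_CC hg (mul_mem_CC hscal hg
        (sub_mem_CC (smul_mem_CC hscal l' one_mem_CC) (mem_CC_self hg)) hp'CC)
        (sub_mem_CC one_mem_CC hpCC))
    show _ ∈ er.Epos
    have hΔ : p' * (1 - p) = p' - p := by rw [mul_sub, mul_one, hp'p]
    convert hB using 1
    rw [mul_assoc, hΔ, sub_mul, smul_one_mul]

theorem IsSpecProj.eq_zero (hAH : er.IsAH) (hscal : er.SMulClosed) {g p : R} {l t : ℝ}
    (hg : g ∈ er.G) (h : er.IsSpecProj g l p) (hgt : er.le (t • 1) g) (hlt : l < t) : p = 0 := by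
  have hp := h.mem_Epos hAH hscal hg
  have hpx : Commute p (g - t • 1) :=
    commute_of_mem_CC hg (h.mem_CC hAH hscal hg) (sub_smul_one_mem_CC hscal hg t)
  have hconj : p * (g - t • 1) * p = (g - t • 1) * p := by
    rw [hpx.eq, mul_assoc, h.mul_self]
  have key : p * (g - t • 1) * p + (l • 1 - g) * p + (t - l) • p = 0 := by
    rw [hconj]; noncomm_ring; module
  have := (eq_zero_of_add_eq_zero (add_mem_Epos (conj_mem_Epos hp hgt)
    (h.smul_one_sub_mul_mem_Epos hAH hscal hg)) (hscal _ (sub_nonneg.mpr hlt.le) _ hp) key).2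
  exact (smul_eq_zero.mp this).resolve_left (sub_ne_zero.mpr hlt.ne')

theorem IsSpecProj.eq_one (hAH : er.IsAH) (hscal : er.SMulClosed) {g p : R} {l t : ℝ}
    (hg : g ∈ er.G) (h : er.IsSpecProj g l p) (hgt : er.le g (t • 1)) (htl : t ≤ l) : p = 1 := by
  have hqCC : 1 - p ∈ er.CC {g} := sub_mem_CC one_mem_CC (h.mem_CC hAH hscal hg)
  have hq := h.one_sub_mem_Epos hAH hscal hg
  have hlg : l • 1 - g ∈ er.Epos := by
    rw [show l • (1 : R) - g = (l - t) • 1 + (t • 1 - g) by module]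
    exact add_mem_Epos (smul_one_mem_Epos hscal (sub_nonneg.mpr htl)) hgt
  have hconj : (1 - p) * (l • 1 - g) * (1 - p) = -((g - l • 1) * (1 - p)) := by
    rw [(commute_of_mem_CC hg hqCC
      (sub_mem_CC (smul_mem_CC hscal l one_mem_CC) (mem_CC_self hg))).eq, mul_assoc,
      h.one_sub_mul_self, ← neg_mul, neg_sub]
  have hx0 := eq_zero_of_mem_Epos_of_neg_mem_Epos (h.mul_one_sub_mem_Epos hAH hscal hg)
    (hconj ▸ conj_mem_Epos hq hlg)
  have := h.one_sub_mul_eq_zero hAH hscal hg one_mem_G (by rw [hx0, zero_mul])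
  rwa [mul_one, sub_eq_zero, eq_comm] at this

end SpectralProjection

section LowerSum

noncomputable def dyadicPoint (a b : ℝ) (n i : ℕ) : ℝ := a + i * ((b - a) / 2 ^ n)

theorem dyadicPoint_succ (a b : ℝ) (n i : ℕ) :
    dyadicPoint a b n (i + 1) = dyadicPoint a b n i + (b - a) / 2 ^ n := by
  simp only [dyadicPoint]; push_cast; ring

theorem dyadicPoint_zero (a b : ℝ) (n : ℕ) : dyadicPoint a b n 0 = a := by
  simp [dyadicPoint]

theorem dyadicPoint_two_pow (a b : ℝ) (n : ℕ) : dyadicPoint a b n (2 ^ n) = b := by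
  simp only [dyadicPoint]; push_cast; field_simp; ring

theorem dyadicPoint_two_mul (a b : ℝ) (n i : ℕ) :
    dyadicPoint a b (n + 1) (2 * i) = dyadicPoint a b n i := by
  simp only [dyadicPoint]; push_cast; field_simp; ring

theorem dyadicPoint_le_succ {a b : ℝ} (hab : a ≤ b) (n i : ℕ) :
    dyadicPoint a b n i ≤ dyadicPoint a b n (i + 1) := by
  rw [dyadicPoint_succ]
  have : 0 ≤ (b - a) / 2 ^ n := div_nonneg (sub_nonneg.mpr hab) (by positivity)
  linarith

variable {R : Type*} [Ring R]

theorem sum_range_sub_dyadicPoint {p : ℝ → R} {a b : ℝ} (hpa : p a = 0) (hpb : p b = 1) (n : ℕ) :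
    ∑ i ∈ Finset.range (2 ^ n), (p (dyadicPoint a b n (i + 1)) - p (dyadicPoint a b n i)) = 1 := by
  rw [Finset.sum_range_sub (fun i => p (dyadicPoint a b n i)), dyadicPoint_two_pow,
    dyadicPoint_zero, hpa, hpb, sub_zero]

variable [Algebra ℝ R] {er : ERing R}

/-- Lower Riemann–Stieltjes sum of `∫ λ dp(λ)` over the `n`-th dyadic partition of `[a, b]`. -/
noncomputable def lowerSum (p : ℝ → R) (a b : ℝ) (n : ℕ) : R :=
  ∑ i ∈ Finset.range (2 ^ n), dyadicPoint a b n i •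
    (p (dyadicPoint a b n (i + 1)) - p (dyadicPoint a b n i))

theorem commute_lowerSum {h : R} {p : ℝ → R} (hp : ∀ l, Commute h (p l)) (a b : ℝ) (n : ℕ) :
    Commute h (lowerSum p a b n) :=
  Commute.sum_right _ _ _ fun _ _ => ((hp _).sub_right (hp _)).smul_right _

theorem commute_lowerSum_lowerSum {p : ℝ → R} (hp : ∀ l l', Commute (p l) (p l')) (a b : ℝ)
    (m n : ℕ) : Commute (lowerSum p a b m) (lowerSum p a b n) :=
  commute_lowerSum (fun l => (commute_lowerSum (hp l) a b m).symm) a b n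

theorem lowerSum_mem_G (hscal : er.SMulClosed) {p : ℝ → R} (hpG : ∀ l, p l ∈ er.G) (a b : ℝ)
    (n : ℕ) : lowerSum p a b n ∈ er.G :=
  sum_mem_G fun _ _ => smul_mem_G hscal _ (sub_mem_G (hpG _) (hpG _))

variable {g : R} {p : ℝ → R} {a b : ℝ}

theorem lowerSum_le (hAH : er.IsAH) (hscal : er.SMulClosed) (hg : g ∈ er.G)
    (hp : ∀ l, er.IsSpecProj g l (p l)) (hab : a ≤ b) (hpa : p a = 0) (hpb : p b = 1) (n : ℕ) :
    er.le (lowerSum p a b n) g := by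
  have hg1 := congrArg (g * ·) (sum_range_sub_dyadicPoint hpa hpb n)
  simp only [mul_one, Finset.mul_sum] at hg1
  show g - lowerSum p a b n ∈ er.Epos
  rw [← hg1, lowerSum, ← Finset.sum_sub_distrib]
  exact sum_mem_Epos fun i _ =>
    ((hp _).le_mul_sub hAH hscal hg (hp _) (dyadicPoint_le_succ hab n i)).1

theorem le_lowerSum_add (hAH : er.IsAH) (hscal : er.SMulClosed) (hg : g ∈ er.G)
    (hp : ∀ l, er.IsSpecProj g l (p l)) (hab : a ≤ b) (hpa : p a = 0) (hpb : p b = 1) (n : ℕ) :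
    er.le g (lowerSum p a b n + ((b - a) / 2 ^ n) • 1) := by
  have hg1 := congrArg (g * ·) (sum_range_sub_dyadicPoint hpa hpb n)
  have hδ := congrArg (((b - a) / 2 ^ n) • ·) (sum_range_sub_dyadicPoint hpa hpb n)
  simp only [mul_one, Finset.mul_sum, Finset.smul_sum] at hg1 hδ
  show lowerSum p a b n + ((b - a) / 2 ^ n) • 1 - g ∈ er.Epos
  rw [← hg1, ← hδ, lowerSum, ← Finset.sum_add_distrib, ← Finset.sum_sub_distrib]
  refine sum_mem_Epos fun i _ => ?_
  rw [← add_smul, ← dyadicPoint_succ]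
  exact ((hp _).le_mul_sub hAH hscal hg (hp _) (dyadicPoint_le_succ hab n i)).2

/-- Refining each interval `[xᵢ, xᵢ₊₁]` at its midpoint `m` adds `(m - xᵢ)(p xᵢ₊₁ - p m) ≥ 0`. -/
theorem lowerSum_le_succ (hAH : er.IsAH) (hscal : er.SMulClosed) (hg : g ∈ er.G)
    (hp : ∀ l, er.IsSpecProj g l (p l)) (hab : a ≤ b) (n : ℕ) :
    er.le (lowerSum p a b n) (lowerSum p a b (n + 1)) := by
  show _ ∈ er.Epos
  rw [lowerSum, lowerSum, pow_succ', Finset.sum_range_two_mul, ← Finset.sum_sub_distrib]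
  refine sum_mem_Epos fun i _ => ?_
  have hright : dyadicPoint a b (n + 1) (2 * i + 1 + 1) = dyadicPoint a b n (i + 1) := by
    rw [← dyadicPoint_two_mul a b n (i + 1)]; ring_nf
  have hmid := dyadicPoint_le_succ hab (n + 1) (2 * i)
  have hmid' := dyadicPoint_le_succ hab (n + 1) (2 * i + 1)
  rw [dyadicPoint_two_mul] at hmid
  rw [hright] at hmid'
  rw [dyadicPoint_two_mul, hright]
  convert hscal _ (sub_nonneg.mpr hmid) _ ((hp _).sub_mem_Epos hAH hscal hg (hp _) hmid') using 1
  module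

theorem eq_of_isSupIn_lowerSum (hAH : er.IsAH) (hscal : er.SMulClosed) (hg : g ∈ er.G)
    (hp : ∀ l, er.IsSpecProj g l (p l)) (hab : a ≤ b) (hpa : p a = 0) (hpb : p b = 1) {s : R}
    (hs : er.IsSupIn er.G (Set.range (lowerSum p a b)) s) : s = g := by
  have hsg : er.le s g := hs.le_of_forall_le hg (lowerSum_le hAH hscal hg hp hab hpa hpb)
  refine (sub_eq_zero.mp (eq_zero_of_forall_le_smul_one hAH hscal hsg fun ε hε => ?_)).symm
  obtain ⟨n, hn⟩ := pow_unbounded_of_one_lt ((b - a) / ε) (one_lt_two (α := ℝ))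
  have hmesh : (b - a) / 2 ^ n ≤ ε := by
    rw [div_le_iff₀ (by positivity)]
    rw [div_lt_iff₀ hε] at hn
    linarith
  show ε • 1 - (g - s) ∈ er.Epos
  rw [show ε • 1 - (g - s) = (ε - (b - a) / 2 ^ n) • 1 +
      (lowerSum p a b n + ((b - a) / 2 ^ n) • 1 - g) + (s - lowerSum p a b n) by module]
  exact add_mem_Epos (add_mem_Epos (smul_one_mem_Epos hscal (sub_nonneg.mpr hmesh))
    (le_lowerSum_add hAH hscal hg hp hab hpa hpb n)) (hs.le n)

theorem commute_of_forall_commute_isSpecProj (hAH : er.IsAH) (hscal : er.SMulClosed)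
    (hg : g ∈ er.G) (hp : ∀ l, er.IsSpecProj g l (p l)) {h : R} (hh : h ∈ er.G)
    (hhp : ∀ l, Commute h (p l)) : Commute h g := by
  have hpCC : ∀ l, p l ∈ er.CC {g} := fun l => (hp l).mem_CC hAH hscal hg
  obtain ⟨t, ht, hlow, hup⟩ := exists_smul_one_bounds hscal hg
  have hab : -t - 1 ≤ t := by linarith
  have hpa := (hp _).eq_zero hAH hscal hg hlow (by linarith : -t - 1 < -t)
  have hpb := (hp t).eq_one hAH hscal hg hup le_rfl
  obtain ⟨s, hs, hsCC⟩ := exists_isSupIn hAH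
    (lowerSum_mem_G hscal (fun l => (mem_CC_singleton.mp (hpCC l)).1) _ _)
    (lowerSum_le_succ hAH hscal hg hp hab)
    (commute_lowerSum_lowerSum (fun l l' => commute_of_mem_CC hg (hpCC l) (hpCC l')) _ _)
    hg (lowerSum_le hAH hscal hg hp hab hpa hpb)
  rw [← eq_of_isSupIn_lowerSum hAH hscal hg hp hab hpa hpb hs]
  exact hsCC h hh fun n => commute_lowerSum hhp _ _ n

end LowerSum

end ERing

/-- In an AH-algebra (with real scalars), `h` commutes with `g`
iff `h` commutes with every projection `p_{g,λ}` of the spectral resolution of `g`. -/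
theorem stmt17 {R : Type*} [Ring R] [Algebra ℝ R] (er : ERing R) (hAH : er.IsAH)
    (hscal : ∀ l : ℝ, 0 ≤ l → ∀ a ∈ er.Epos, l • a ∈ er.Epos)
    (g h : R) (hg : g ∈ er.G) (hh : h ∈ er.G) (p : ℝ → R)
    (hp : ∀ l : ℝ, er.IsSpecProj g l (p l)) :
    (h * g = g * h) ↔ ∀ l : ℝ, h * p l = p l * h :=
  ⟨fun hhg l => (ERing.mem_CC_singleton.mp ((hp l).mem_CC hAH hscal hg)).2 h hh hhg,
    fun hhp => ERing.commute_of_forall_commute_isSpecProj hAH hscal hg hp hh hhp⟩
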